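/- arXiv:1407.5707 — 5 statements merged into one kernel-verified Lean document; each statement's English description precedes it below -/
import Mathlib

section
/- Let A be a complete noetherian adic ring with ideal of definition I, φ an automorphism of A, and M a finitely generated A-module with a φ-semilinear endomorphism F. Then M = M_ord ⊕ M_nil, where M_ord is the maximal F-stable submodule on which F is bijective and M_nil is the maximal F-stable submodule on which F is topologically nilpotent (i.e., for every n there is k with F^k(M_nil) ⊆ I^n·M_nil). -/
/-!
Modulo `Jₙ = Iⁿ • M` this is Fitting's lemma, made semilinear: `φ` is bijective, so images and
preimages of the iterates of `F` are submodules. Since `M ⧸ Jₙ` is artinian the chain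
`F^k(M) + Jₙ` stabilizes at some `Rₙ`, and since `M` is noetherian the chain `(F^k)⁻¹(Jₙ)`
stabilizes at some `Kₙ`; then `Rₙ + Kₙ = M`, `Rₙ ∩ Kₙ ⊆ Jₙ`, and `F` is bijective on `Rₙ`
modulo `Jₙ`. Put `M_ord = ⋂ Rₙ` and `M_nil = ⋂ Kₙ`. Approximate decompositions and approximate
preimages at the levels `n` differ by elements of `Jₙ`, so they form Cauchy sequences, whose
limits exist because a finite module over the complete ring `A` is complete; uniqueness comes
from Krull's intersection theorem `⋂ Jₙ = 0`.
-/

open Filter Function Submodule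

theorem Antitone.eventually_eq_iInf {α : Type*} [CompleteLattice α] {f : ℕ → α}
    (hf : Antitone f) (h : atTop.EventuallyConst f) : ∀ᶠ j in atTop, f j = ⨅ i, f i := by
  obtain ⟨k, hk⟩ := eventuallyConst_atTop.mp h
  filter_upwards [eventually_ge_atTop k] with j hj
  refine le_antisymm (le_iInf fun i => ?_) (iInf_le f j)
  calc f j = f (max i j) := by rw [hk j hj, hk _ (hj.trans (le_max_right i j))]
    _ ≤ f i := hf (le_max_left i j)

theorem Monotone.eventually_eq_iSup {α : Type*} [CompleteLattice α] {f : ℕ → α}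
    (hf : Monotone f) (h : atTop.EventuallyConst f) : ∀ᶠ j in atTop, f j = ⨆ i, f i :=
  hf.dual_right.eventually_eq_iInf h

section

variable {A M : Type*} [CommRing A] [AddCommGroup M] [Module A M]

theorem isArtinian_quotient_smul_top (J : Ideal A) [IsArtinianRing (A ⧸ J)]
    [Module.Finite A M] : IsArtinian A (M ⧸ J • (⊤ : Submodule A M)) :=
  have : Module.Finite (A ⧸ J) (M ⧸ J • (⊤ : Submodule A M)) :=
    .of_restrictScalars_finite A _ _
  isArtinian_of_surjective_algebraMap (R := A ⧸ J) Ideal.Quotient.mk_surjective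

-- Every element of the completion of `M` is a sum of terms `r • x` with `r` in the completion
-- of `A`, and each such `r` comes from `A`.
theorem IsPrecomplete.of_finite (I : Ideal A) [IsPrecomplete I A] [Module.Finite A M] :
    IsPrecomplete I M := by
  rw [← AdicCompletion.of_surjective_iff]
  intro y
  obtain ⟨t, rfl⟩ := AdicCompletion.ofTensorProduct_surjective_of_finite I M y
  induction t using TensorProduct.induction_on with
  | zero => exact ⟨0, by simp⟩
  | tmul r x =>
    obtain ⟨a, rfl⟩ := AdicCompletion.of_surjective I A r
    refine ⟨a • x, ?_⟩
    rw [AdicCompletion.ofTensorProduct_tmul, map_smul]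
    exact (algebraMap_smul (AdicCompletion I A) a _).symm
  | add s t hs ht =>
    obtain ⟨x, hx⟩ := hs
    obtain ⟨y, hy⟩ := ht
    exact ⟨x + y, by rw [map_add, map_add, hx, hy]⟩

theorem IsHausdorff.eq_zero_of_forall_mem {I : Ideal A} [IsHausdorff I M] {m : M}
    (h : ∀ n, m ∈ (I ^ n • ⊤ : Submodule A M)) : m = 0 :=
  IsHausdorff.haus ‹_› m fun n => SModEq.zero.mpr (h n)

theorem IsPrecomplete.exists_mem_iInf_of_cauchy {I : Ideal A} [IsPrecomplete I M]
    {P : ℕ → Submodule A M} (hP : ∀ n, I ^ n • ⊤ ≤ P n) {x : ℕ → M} (hx : ∀ n, x n ∈ P n)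
    (hcauchy : ∀ {a b}, a ≤ b → x a - x b ∈ (I ^ a • ⊤ : Submodule A M)) :
    ∃ L ∈ ⨅ n, P n, ∀ n, x n - L ∈ (I ^ n • ⊤ : Submodule A M) := by
  obtain ⟨L, hL⟩ := IsPrecomplete.prec ‹_› fun hab => SModEq.sub_mem.mpr (hcauchy hab)
  have hL' n : x n - L ∈ (I ^ n • ⊤ : Submodule A M) := SModEq.sub_mem.mp (hL n)
  refine ⟨L, mem_iInf _ |>.mpr fun n => ?_, hL'⟩
  simpa using sub_mem (hx n) (hP n (hL' n))

theorem IsCompl.mem_smul {P Q : Submodule A M} (h : IsCompl P Q) (a : Ideal A)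
    {x : M} (hxQ : x ∈ Q) (hx : x ∈ a • (⊤ : Submodule A M)) : x ∈ a • Q := by
  rw [← h.sup_eq_top, smul_sup] at hx
  obtain ⟨p, hp, q, hq, rfl⟩ := mem_sup.mp hx
  have hp0 : p = 0 := disjoint_def.mp h.disjoint p (smul_le_right hp)
    (by simpa using sub_mem hxQ (smul_le_right hq))
  simpa [hp0] using hq

end

namespace Fitting

variable {A M : Type*} [CommRing A] [AddCommGroup M] [Module A M] {σ : A →+* A}
  (F : M →ₛₗ[σ] M)

theorem iterate_map_smul (k : ℕ) (a : A) (m : M) :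
    (⇑F)^[k] (a • m) = (⇑σ)^[k] a • (⇑F)^[k] m := by
  induction k generalizing a m with
  | zero => rfl
  | succ k ih => simp only [iterate_succ_apply, map_smulₛₗ, ih]

def rangeIter [RingHomSurjective σ] (k : ℕ) : Submodule A M where
  carrier := Set.range (⇑F)^[k]
  zero_mem' := ⟨0, iterate_map_zero F k⟩
  add_mem' := by
    rintro _ _ ⟨x, rfl⟩ ⟨y, rfl⟩
    exact ⟨x + y, iterate_map_add F k x y⟩
  smul_mem' := by
    rintro a _ ⟨x, rfl⟩
    obtain ⟨b, rfl⟩ := σ.surjective.iterate k a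
    exact ⟨b • x, iterate_map_smul F k b x⟩

def comapIter (J : Submodule A M) (k : ℕ) : Submodule A M where
  carrier := {m | (⇑F)^[k] m ∈ J}
  zero_mem' := by simp only [Set.mem_ofPred_eq, iterate_map_zero, zero_mem]
  add_mem' {x y} hx hy := by
    simpa only [Set.mem_ofPred_eq, iterate_map_add] using add_mem hx hy
  smul_mem' a x hx := by
    simpa only [Set.mem_ofPred_eq, iterate_map_smul] using J.smul_mem _ hx

-- For an `F`-stable `J`, the two summands of Fitting's decomposition of `M ⧸ J`, pulled back
-- to `M`.
def ordPartMod [RingHomSurjective σ] (J : Submodule A M) : Submodule A M :=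
  ⨅ k, rangeIter F k ⊔ J

def nilPartMod (J : Submodule A M) : Submodule A M :=
  ⨆ k, comapIter F J k

variable {F}

@[simp]
theorem mem_comapIter {J : Submodule A M} {k : ℕ} {m : M} :
    m ∈ comapIter F J k ↔ (⇑F)^[k] m ∈ J :=
  Iff.rfl

theorem rangeIter_antitone [RingHomSurjective σ] : Antitone (rangeIter F) :=
  antitone_nat_of_succ_le fun k => by
    rintro _ ⟨x, rfl⟩
    exact ⟨F x, (iterate_succ_apply F k x).symm⟩

section Mod

variable {J : Submodule A M}

theorem iterate_mem (hJ : J ≤ J.comap F) {m : M} (hm : m ∈ J) (k : ℕ) : (⇑F)^[k] m ∈ J := by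
  induction k with
  | zero => exact hm
  | succ k ih => rw [iterate_succ_apply']; exact hJ ih

theorem comapIter_monotone (hJ : J ≤ J.comap F) : Monotone (comapIter F J) :=
  monotone_nat_of_le_succ fun k m hm => by
    rw [mem_comapIter, iterate_succ_apply']
    exact hJ hm

theorem le_ordPartMod [RingHomSurjective σ] : J ≤ ordPartMod F J :=
  le_iInf fun _ => le_sup_right

theorem le_nilPartMod : J ≤ nilPartMod F J :=
  le_iSup (comapIter F J) 0

theorem ordPartMod_mono [RingHomSurjective σ] {J' : Submodule A M} (h : J ≤ J') :
    ordPartMod F J ≤ ordPartMod F J' :=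
  iInf_mono fun _ => sup_le_sup_left h _

theorem nilPartMod_mono {J' : Submodule A M} (h : J ≤ J') : nilPartMod F J ≤ nilPartMod F J' :=
  iSup_mono fun _ _ hm => h hm

theorem rangeIter_sup_le_comap [RingHomSurjective σ] (hJ : J ≤ J.comap F) (k : ℕ) :
    rangeIter F k ⊔ J ≤ (rangeIter F (k + 1) ⊔ J).comap F := by
  refine sup_le ?_ (hJ.trans (comap_mono le_sup_right))
  rintro _ ⟨x, rfl⟩
  exact mem_sup_left ⟨x, iterate_succ_apply' F k x⟩

theorem ordPartMod_le_comap [RingHomSurjective σ] (hJ : J ≤ J.comap F) :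
    ordPartMod F J ≤ (ordPartMod F J).comap F := fun _ hm =>
  mem_iInf _ |>.mpr fun k =>
    sup_le_sup_right (rangeIter_antitone k.le_succ) J
      (rangeIter_sup_le_comap hJ k (mem_iInf _ |>.mp hm k))

theorem comapIter_le_comap (hJ : J ≤ J.comap F) (k : ℕ) :
    comapIter F J k ≤ (comapIter F J k).comap F := fun m hm => by
  rw [Submodule.mem_comap, mem_comapIter, ← iterate_succ_apply, iterate_succ_apply']
  exact hJ hm

theorem nilPartMod_le_comap (hJ : J ≤ J.comap F) : nilPartMod F J ≤ (nilPartMod F J).comap F :=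
  iSup_le fun k => (comapIter_le_comap hJ k).trans (comap_mono (le_iSup (comapIter F J) k))

theorem eventually_rangeIter_sup_eq [RingHomSurjective σ] [IsArtinian A (M ⧸ J)] :
    ∀ᶠ k in atTop, rangeIter F k ⊔ J = ordPartMod F J := by
  have hanti : Antitone fun k => rangeIter F k ⊔ J :=
    fun _ _ h => sup_le_sup_right (rangeIter_antitone h) J
  have hconst := (IsArtinian.eventuallyConst_of_isArtinian
    ⟨fun k => (rangeIter F k).map J.mkQ, fun _ _ h => map_mono (rangeIter_antitone h)⟩).comp
    (fun N => N.comap J.mkQ)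
  exact hanti.eventually_eq_iInf
    (hconst.congr (.of_forall fun _ => (comap_map_mkQ J _).trans (sup_comm _ _)))

theorem eventually_comapIter_eq [IsNoetherian A M] (hJ : J ≤ J.comap F) :
    ∀ᶠ k in atTop, comapIter F J k = nilPartMod F J :=
  (comapIter_monotone hJ).eventually_eq_iSup
    (eventuallyConst_of_isNoetherian ⟨comapIter F J, comapIter_monotone hJ⟩)

end Mod

section FittingMod

variable [RingHomSurjective σ] {J : Submodule A M} [IsArtinian A (M ⧸ J)] [IsNoetherian A M]

theorem exists_rangeIter_sup_eq_and_comapIter_eq (hJ : J ≤ J.comap F) :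
    ∃ k, ∀ j ≥ k, rangeIter F j ⊔ J = ordPartMod F J ∧ comapIter F J j = nilPartMod F J :=
  eventually_atTop.mp (eventually_rangeIter_sup_eq.and (eventually_comapIter_eq hJ))

theorem ordPartMod_sup_nilPartMod (hJ : J ≤ J.comap F) : ordPartMod F J ⊔ nilPartMod F J = ⊤ := by
  obtain ⟨k, hk⟩ := exists_rangeIter_sup_eq_and_comapIter_eq hJ
  refine eq_top_iff.mpr fun m _ => ?_
  have hm : (⇑F)^[k] m ∈ rangeIter F (k + k) ⊔ J := by
    rw [(hk _ le_self_add).1, ← (hk k le_rfl).1]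
    exact mem_sup_left ⟨m, rfl⟩
  obtain ⟨_, ⟨x, rfl⟩, ι, hι, hsum⟩ := mem_sup.mp hm
  refine mem_sup.mpr ⟨(⇑F)^[k] x, ?_, m - (⇑F)^[k] x, ?_, add_sub_cancel _ _⟩
  · rw [← (hk k le_rfl).1]
    exact mem_sup_left ⟨x, rfl⟩
  · rw [← (hk k le_rfl).2, mem_comapIter, iterate_map_sub, ← iterate_add_apply, ← hsum,
      add_sub_cancel_left]
    exact hι

theorem ordPartMod_inf_nilPartMod_le (hJ : J ≤ J.comap F) :
    ordPartMod F J ⊓ nilPartMod F J ≤ J := by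
  obtain ⟨k, hk⟩ := exists_rangeIter_sup_eq_and_comapIter_eq hJ
  rintro m ⟨hR, hK⟩
  rw [SetLike.mem_coe, ← (hk k le_rfl).1] at hR
  rw [SetLike.mem_coe, ← (hk k le_rfl).2] at hK
  obtain ⟨_, ⟨x, rfl⟩, ι, hι, rfl⟩ := mem_sup.mp hR
  rw [mem_comapIter, iterate_map_add] at hK
  have hx : x ∈ comapIter F J (k + k) := by
    rw [mem_comapIter, iterate_add_apply]
    simpa using sub_mem hK (iterate_mem hJ hι k)
  rw [(hk _ le_self_add).2, ← (hk k le_rfl).2] at hx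
  exact add_mem hx hι

theorem mem_of_apply_mem (hJ : J ≤ J.comap F) {m : M} (hm : m ∈ ordPartMod F J)
    (hFm : F m ∈ J) : m ∈ J :=
  ordPartMod_inf_nilPartMod_le hJ ⟨hm, le_iSup (comapIter F J) 1 hFm⟩

theorem exists_apply_sub_mem (hJ : J ≤ J.comap F) {m : M} (hm : m ∈ ordPartMod F J) :
    ∃ x ∈ ordPartMod F J, F x - m ∈ J := by
  obtain ⟨k, hk⟩ := exists_rangeIter_sup_eq_and_comapIter_eq hJ
  rw [← (hk (k + 1) k.le_succ).1] at hm
  obtain ⟨_, ⟨x, rfl⟩, ι, hι, rfl⟩ := mem_sup.mp hm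
  refine ⟨(⇑F)^[k] x, ?_, ?_⟩
  · rw [← (hk k le_rfl).1]
    exact mem_sup_left ⟨x, rfl⟩
  · rw [← iterate_succ_apply' F k x, sub_add_cancel_left]
    exact neg_mem hι

end FittingMod

section Adic

variable (F) (I : Ideal A)

-- `M_ord` and `M_nil`.
def ordPart [RingHomSurjective σ] : Submodule A M :=
  ⨅ n, ordPartMod F (I ^ n • ⊤ : Submodule A M)

def nilPart : Submodule A M :=
  ⨅ n, nilPartMod F (I ^ n • ⊤ : Submodule A M)

variable {F}

theorem smul_top_le_comap {a : Ideal A} (ha : a ≤ a.comap σ) :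
    (a • ⊤ : Submodule A M) ≤ (a • ⊤ : Submodule A M).comap F := fun m hm => by
  refine smul_induction_on hm (fun r hr x _ => ?_) (fun x y hx hy => ?_)
  · rw [Submodule.mem_comap, map_smulₛₗ]
    exact smul_mem_smul (ha hr) mem_top
  · rw [Submodule.mem_comap, map_add]
    exact add_mem hx hy

variable {I} in
theorem pow_smul_top_le_comap (hI : I ≤ I.comap σ) (n : ℕ) :
    (I ^ n • ⊤ : Submodule A M) ≤ (I ^ n • ⊤ : Submodule A M).comap F :=
  smul_top_le_comap ((Ideal.pow_right_mono hI n).trans (Ideal.le_comap_pow σ n))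

theorem ordPartMod_pow_antitone [RingHomSurjective σ] :
    Antitone fun n => ordPartMod F (I ^ n • ⊤ : Submodule A M) := fun _ _ h =>
  ordPartMod_mono (smul_mono_left (Ideal.pow_le_pow_right h))

theorem nilPartMod_pow_antitone :
    Antitone fun n => nilPartMod F (I ^ n • ⊤ : Submodule A M) := fun _ _ h =>
  nilPartMod_mono (smul_mono_left (Ideal.pow_le_pow_right h))

theorem le_ordPart [RingHomSurjective σ] {N : Submodule A M} (hN : Set.SurjOn F N N) :
    N ≤ ordPart F I := fun _ hm =>
  mem_iInf _ |>.mpr fun _ => mem_iInf _ |>.mpr fun k =>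
    mem_sup_left <| let ⟨x, _, hx⟩ := hN.iterate k hm; ⟨x, hx⟩

theorem le_nilPart {N : Submodule A M}
    (hN : ∀ n, ∃ k, ∀ m ∈ N, (⇑F)^[k] m ∈ (I ^ n • N : Submodule A M)) : N ≤ nilPart F I :=
  fun m hm => mem_iInf _ |>.mpr fun n =>
    let ⟨k, hk⟩ := hN n
    le_iSup (comapIter F _) k (smul_mono le_rfl le_top (hk m hm))

variable {I} (hI : I ≤ I.comap σ)
include hI

theorem ordPart_le_comap [RingHomSurjective σ] : ordPart F I ≤ (ordPart F I).comap F :=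
  fun _ hm => mem_iInf _ |>.mpr fun n =>
    ordPartMod_le_comap (pow_smul_top_le_comap hI n) (mem_iInf _ |>.mp hm n)

theorem nilPart_le_comap : nilPart F I ≤ (nilPart F I).comap F :=
  fun _ hm => mem_iInf _ |>.mpr fun n =>
    nilPartMod_le_comap (pow_smul_top_le_comap hI n) (mem_iInf _ |>.mp hm n)

variable [RingHomSurjective σ] [IsNoetherian A M]
  [∀ n, IsArtinian A (M ⧸ (I ^ n • ⊤ : Submodule A M))]

theorem disjoint_ordPart_nilPart [IsHausdorff I M] : Disjoint (ordPart F I) (nilPart F I) :=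
  disjoint_def.mpr fun _ hR hK => IsHausdorff.eq_zero_of_forall_mem fun n =>
    ordPartMod_inf_nilPartMod_le (pow_smul_top_le_comap hI n)
      ⟨mem_iInf _ |>.mp hR n, mem_iInf _ |>.mp hK n⟩

-- Decompositions modulo `Iᵃ` and `Iᵇ` differ by an element of `Rₐ ∩ Kₐ ⊆ Iᵃ • ⊤`.
theorem exists_sub_mem_nilPart [IsPrecomplete I M] (m : M) :
    ∃ r ∈ ordPart F I, m - r ∈ nilPart F I := by
  have hJ := pow_smul_top_le_comap (F := F) hI
  have hdec n : ∃ r ∈ ordPartMod F (I ^ n • ⊤ : Submodule A M),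
      m - r ∈ nilPartMod F (I ^ n • ⊤ : Submodule A M) := by
    obtain ⟨r, hr, k, hk, rfl⟩ :=
      mem_sup.mp ((ordPartMod_sup_nilPartMod (hJ n)).ge (mem_top (x := m)))
    exact ⟨r, hr, by rwa [add_sub_cancel_left]⟩
  choose r hr hmr using hdec
  obtain ⟨L, hL, hrL⟩ := IsPrecomplete.exists_mem_iInf_of_cauchy (fun _ => le_ordPartMod) hr
    fun {a b} hab => ordPartMod_inf_nilPartMod_le (hJ a)
      ⟨sub_mem (hr a) (ordPartMod_pow_antitone I hab (hr b)),
        by simpa using sub_mem (nilPartMod_pow_antitone I hab (hmr b)) (hmr a)⟩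
  refine ⟨L, hL, mem_iInf _ |>.mpr fun n => ?_⟩
  rw [← sub_add_sub_cancel m (r n) L]
  exact add_mem (hmr n) (le_nilPartMod (hrL n))

theorem isCompl_ordPart_nilPart [IsHausdorff I M] [IsPrecomplete I M] :
    IsCompl (ordPart F I) (nilPart F I) := by
  refine ⟨disjoint_ordPart_nilPart hI, codisjoint_iff.mpr (eq_top_iff.mpr fun m _ => ?_)⟩
  obtain ⟨r, hr, hmr⟩ := exists_sub_mem_nilPart hI m
  exact mem_sup.mpr ⟨r, hr, m - r, hmr, add_sub_cancel r m⟩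

theorem injOn_ordPart [IsHausdorff I M] : Set.InjOn F (ordPart F I) := fun x hx y hy hxy =>
  sub_eq_zero.mp <| IsHausdorff.eq_zero_of_forall_mem (I := I) fun n =>
    mem_of_apply_mem (pow_smul_top_le_comap hI n)
      (sub_mem (mem_iInf _ |>.mp hx n) (mem_iInf _ |>.mp hy n))
      (by rw [map_sub, hxy, sub_self]; exact zero_mem _)

-- Approximate preimages modulo `Iᵃ` and `Iᵇ` differ by an element of `Iᵃ • ⊤`, by injectivity
-- of `F` on `Rₐ` modulo `Iᵃ`.
theorem surjOn_ordPart [IsHausdorff I M] [IsPrecomplete I M] :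
    Set.SurjOn F (ordPart F I) (ordPart F I) := by
  intro m hm
  have hJ := pow_smul_top_le_comap (F := F) hI
  choose x hx hFx using fun n => exists_apply_sub_mem (hJ n) (mem_iInf _ |>.mp hm n)
  obtain ⟨L, hL, hxL⟩ := IsPrecomplete.exists_mem_iInf_of_cauchy (fun _ => le_ordPartMod) hx
    fun {a b} hab => mem_of_apply_mem (hJ a)
      (sub_mem (hx a) (ordPartMod_pow_antitone I hab (hx b))) (by
        rw [map_sub, ← sub_sub_sub_cancel_right _ _ m]
        exact sub_mem (hFx a) (smul_mono_left (Ideal.pow_le_pow_right hab) (hFx b)))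
  refine ⟨L, hL, sub_eq_zero.mp <| IsHausdorff.eq_zero_of_forall_mem (I := I) fun n => ?_⟩
  have hsplit : F L - m = (F (x n) - m) - F (x n - L) := by rw [map_sub]; abel
  rw [hsplit]
  exact sub_mem (hFx n) (hJ n (hxL n))

theorem bijOn_ordPart [IsHausdorff I M] [IsPrecomplete I M] :
    Set.BijOn F (ordPart F I) (ordPart F I) :=
  ⟨fun _ hm => ordPart_le_comap hI hm, injOn_ordPart hI, surjOn_ordPart hI⟩

theorem exists_iterate_mem_smul_nilPart [IsHausdorff I M] [IsPrecomplete I M] (n : ℕ) :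
    ∃ k, ∀ m ∈ nilPart F I, (⇑F)^[k] m ∈ (I ^ n • nilPart F I : Submodule A M) := by
  obtain ⟨k, hk⟩ := (eventually_comapIter_eq (pow_smul_top_le_comap (F := F) hI n)).exists
  refine ⟨k, fun m hm => (isCompl_ordPart_nilPart hI).mem_smul _
    (iterate_mem (nilPart_le_comap hI) hm k) ?_⟩
  rw [← mem_comapIter, hk]
  exact mem_iInf _ |>.mp hm n

end Adic

end Fitting

open Fitting

/-- Fitting's lemma, topological version: over a complete noetherian adic ring `(A, I)`
(with `A/Iⁿ` Artinian), a `φ`-semilinear endomorphism `F` of a finitely generated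
`A`-module `M` induces a decomposition `M = M_ord ⊕ M_nil` into the maximal `F`-stable
submodule on which `F` is bijective and the maximal one on which `F` is topologically
nilpotent. -/
theorem stmt_1 {A M : Type*} [CommRing A] [IsNoetherianRing A]
    (I : Ideal A) [IsAdicComplete I A] (hart : ∀ n : ℕ, IsArtinianRing (A ⧸ I ^ n))
    (φ : A ≃+* A) (hφI : I.map (φ : A →+* A) = I)
    [AddCommGroup M] [Module A M] [Module.Finite A M]
    (F : M →+ M) (hF : ∀ (a : A) (m : M), F (a • m) = φ a • F m) :
    ∃ Mord Mnil : Submodule A M,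
      IsCompl Mord Mnil ∧
      (∀ m ∈ Mord, F m ∈ Mord) ∧ Set.BijOn F Mord Mord ∧
      (∀ m ∈ Mnil, F m ∈ Mnil) ∧
      (∀ n : ℕ, ∃ k : ℕ, ∀ m ∈ Mnil, (⇑F)^[k] m ∈ (I ^ n • Mnil : Submodule A M)) ∧
      (∀ N : Submodule A M, (∀ m ∈ N, F m ∈ N) → Set.BijOn F N N → N ≤ Mord) ∧
      (∀ N : Submodule A M, (∀ m ∈ N, F m ∈ N) →
        (∀ n : ℕ, ∃ k : ℕ, ∀ m ∈ N, (⇑F)^[k] m ∈ (I ^ n • N : Submodule A M)) →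
        N ≤ Mnil) := by
  let G : M →ₛₗ[(φ : A →+* A)] M := { F with map_smul' := hF }
  have hI : I ≤ I.comap (φ : A →+* A) := Ideal.map_le_iff_le_comap.mp hφI.le
  have : IsHausdorff I M := .of_le_jacobson I M (IsAdicComplete.le_jacobson_bot I)
  have : IsPrecomplete I M := .of_finite I
  have (n : ℕ) : IsArtinian A (M ⧸ (I ^ n • ⊤ : Submodule A M)) :=
    have := hart n
    isArtinian_quotient_smul_top _
  exact ⟨ordPart G I, nilPart G I, isCompl_ordPart_nilPart hI, fun _ hm => ordPart_le_comap hI hm,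
    bijOn_ordPart hI, fun _ hm => nilPart_le_comap hI hm, exists_iterate_mem_smul_nilPart hI,
    fun N _ hN => le_ordPart I hN.surjOn, fun N _ hN => le_nilPart I hN⟩
end

section
/- Let A → B be a local homomorphism of local rings making B a flat A-algebra, and let M be an arbitrary A-module. Then M is a free A-module of finite rank if and only if M ⊗_A B is a free B-module of finite rank. -/
open TensorProduct

/-- Lemma `fflatfreedescent`: for a flat local homomorphism of local rings `A → B`
and an arbitrary `A`-module `M`, `M` is finite free over `A` iff `B ⊗_A M` is finite
free over `B`. -/
theorem stmt_2 {A B : Type*} [CommRing A] [CommRing B] [IsLocalRing A] [IsLocalRing B]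
    [Algebra A B] [IsLocalHom (algebraMap A B)] [Module.Flat A B]
    (M : Type*) [AddCommGroup M] [Module A M] :
    (Module.Free A M ∧ Module.Finite A M) ↔
      (Module.Free B (B ⊗[A] M) ∧ Module.Finite B (B ⊗[A] M)) := by
  refine ⟨fun ⟨_, _⟩ ↦ ⟨inferInstance, inferInstance⟩, fun ⟨_, _⟩ ↦ ?_⟩
  have : Module.FaithfullyFlat A B := .of_flat_of_isLocalHom
  have : Module.Finite A M := .of_finite_tensorProduct_of_faithfullyFlat B
  have : Module.Flat A M := .of_flat_tensorProduct A M B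
  exact ⟨Module.free_of_flat_of_isLocalRing, inferInstance⟩
end

section
/- Let {A_r} be an inductive system of local rings with local transition maps, I_r ⊆ A_r proper ideals compatible with the transition maps, and {M_r} a tower of modules (M_r a finite free A_r-module, with transition maps ρ_{r,s} : M_r → M_s ⊗_{A_s} A_r for r ≥ s) equipped with a compatible action of a procyclic group Δ_1 with descending subgroups Δ_r such that Δ_r acts trivially on M_r. Suppose: (a) M_r/I_r M_r is a free (A_r/I_r)[Δ_1/Δ_r]-module of rank d independent of r, and (b) the reduced transition maps are surjective. Then M_r is a free A_r[Δ_1/Δ_r]-module of rank d, and the induced maps M_r ⊗_{A_r[Δ_1/Δ_r]} A_r[Δ_1/Δ_s] → M_s ⊗_{A_s} A_r are isomorphisms for all r ≥ s. -/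
/-!
Over the local ring `A r`, Nakayama's lemma lifts a basis of `M r / I r M r` to a surjection
`A r[G ⧸ N r]^d → M r`. Since `M r` is `A r`-projective, the kernel is an `A r`-direct summand
`K` with `K ⊆ I r • K`, so it vanishes. For `s ≤ r`, Nakayama again makes `ρ` surjective. It
factors through `M r ⧸ (g - 1 : g ∈ N s)`, which is spanned over `A r` by `|G ⧸ N s| * d`
elements, while its target is `A r`-free of exactly that rank; a surjection of the free module
of that rank onto itself is injective, so the factored map is an isomorphism.
-/

open MonoidAlgebra

section Nakayama

variable {A : Type*} [CommRing A] {I : Ideal A}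

theorem LinearMap.injective_of_surjective_of_ker_le_smul_top {F P : Type*}
    [AddCommGroup F] [Module A F] [Module.Finite A F] [AddCommGroup P] [Module A P]
    [Module.Projective A P] (hI : I ≤ (⊥ : Ideal A).jacobson) (f : F →ₗ[A] P)
    (hf : Function.Surjective f) (hker : LinearMap.ker f ≤ I • ⊤) : Function.Injective f := by
  obtain ⟨σ, hσ⟩ := f.exists_rightInverse_of_surjective (LinearMap.range_eq_top.mpr hf)
  -- `π = id - σ ∘ f` projects `F` onto the direct summand `ker f`
  set π : F →ₗ[A] F := LinearMap.id - σ ∘ₗ f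
  have hfix : ∀ x ∈ LinearMap.ker f, π x = x := fun x hx => by
    simp [π, LinearMap.mem_ker.mp hx]
  have hrange : LinearMap.range π = LinearMap.ker f := by
    refine le_antisymm ?_ fun x hx => ⟨x, hfix x hx⟩
    rintro _ ⟨x, rfl⟩
    simp [π, show f (σ (f x)) = f x from LinearMap.congr_fun hσ (f x)]
  have hfg : (LinearMap.ker f).FG := by
    rw [← hrange, LinearMap.range_eq_map]
    exact Module.Finite.fg_top.map π
  have hle : LinearMap.ker f ≤ I • LinearMap.ker f :=
    calc LinearMap.ker f ≤ (I • ⊤ : Submodule A F).map π :=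
          fun x hx => ⟨x, hker hx, hfix x hx⟩
      _ = I • LinearMap.ker f := by rw [Submodule.map_smul'', Submodule.map_top, hrange]
  exact LinearMap.ker_eq_bot.mp (Submodule.eq_bot_of_le_smul_of_le_jacobson_bot I _ hfg hle hI)

theorem LinearMap.surjective_of_surjective_mkQ_comp {M P : Type*}
    [AddCommGroup M] [Module A M] [AddCommGroup P] [Module A P] [Module.Finite A P]
    (hI : I ≤ (⊥ : Ideal A).jacobson) (f : M →ₗ[A] P)
    (hf : Function.Surjective fun m =>
      (Submodule.Quotient.mk (f m) : P ⧸ I • (⊤ : Submodule A P))) :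
    Function.Surjective f := by
  rw [← LinearMap.range_eq_top, eq_top_iff]
  refine Submodule.le_of_le_smul_of_le_jacobson_bot Module.Finite.fg_top hI fun y _ => ?_
  obtain ⟨m, hm⟩ := hf (Submodule.Quotient.mk y)
  rw [← add_sub_cancel (f m) y]
  exact Submodule.add_mem_sup ⟨m, rfl⟩ ((Submodule.Quotient.eq _).mp hm.symm)

end Nakayama

theorem LinearMap.injective_of_surjective_of_span_eq_top {R M P ι : Type*} [CommRing R]
    [AddCommGroup M] [Module R M] [AddCommGroup P] [Module R P] [Finite ι] {v : ι → M}
    (hv : Submodule.span R (Set.range v) = ⊤) (b : Module.Basis ι R P) (f : M →ₗ[R] P)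
    (hf : Function.Surjective f) : Function.Injective f := by
  have : Module.Finite R P := .of_basis b
  have hv' : Function.Surjective (Finsupp.linearCombination R v) := by
    rw [← LinearMap.range_eq_top, Finsupp.range_linearCombination, hv]
  have hinj : Function.Injective (f ∘ Finsupp.linearCombination R v) :=
    OrzechProperty.injective_of_surjective_of_injective b.repr.symm.toLinearMap
      (f ∘ₗ Finsupp.linearCombination R v) b.repr.symm.injective (hf.comp hv')
  exact hinj.of_comp_right hv'

section LiftBasis

variable {A R : Type*} [CommRing A] [CommRing R] [Algebra A R]

theorem Finsupp.mem_ideal_smul_top {ι : Type*} {J : Ideal R} {x : ι →₀ R}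
    (hx : ∀ i, x i ∈ J) :
    x ∈ J • (⊤ : Submodule R (ι →₀ R)) := by
  rw [← x.sum_single]
  refine Submodule.finsuppSum_mem _ _ _ _ fun i _ => ?_
  simpa using Submodule.smul_mem_smul (hx i) (Submodule.mem_top (x := Finsupp.single i (1 : R)))

theorem Ideal.mem_smul_top_of_mem_map_smul_top {V : Type*} [AddCommGroup V] [Module A V]
    [Module R V] [IsScalarTower A R V] {I : Ideal A} {v : V}
    (hv : v ∈ I.map (algebraMap A R) • (⊤ : Submodule R V)) :
    v ∈ I • (⊤ : Submodule A V) := by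
  rwa [← Submodule.restrictScalars_top A R V, ← Ideal.smul_restrictScalars]

variable {M : Type*} [AddCommGroup M] [Module A M] [Module R M] [IsScalarTower A R M]

theorem Module.Basis.nonempty_basis_of_quotient [Module.Finite A R] [Module.Finite A M]
    [Module.Projective A M] {I : Ideal A} (hI : I ≤ (⊥ : Ideal A).jacobson)
    {ι : Type*} [Finite ι]
    (b : Module.Basis ι (R ⧸ I.map (algebraMap A R))
      (M ⧸ I.map (algebraMap A R) • (⊤ : Submodule R M))) :
    Nonempty (Module.Basis ι R M) := by
  set J := I.map (algebraMap A R)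
  choose m hm using fun i => Submodule.Quotient.mk_surjective (J • ⊤) (b i)
  set φ := Finsupp.linearCombination R m
  have hφ : ∀ x, b.repr (Submodule.Quotient.mk (φ x)) =
      x.mapRange (Ideal.Quotient.mk J) (map_zero _) := by
    intro x
    induction x using Finsupp.induction_linear with
    | zero => simp
    | add x y hx hy => simp [hx, hy, Finsupp.mapRange_add]
    | single i r =>
      simp only [φ, Finsupp.mapRange_single, Finsupp.linearCombination_single]
      rw [← Module.Quotient.mk_smul_mk, hm, map_smul, Module.Basis.repr_self,
        Finsupp.smul_single, smul_eq_mul, mul_one]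
  have hsurj : Function.Surjective φ := by
    rw [← LinearMap.range_eq_top, ← Submodule.restrictScalars_eq_top_iff A, eq_top_iff]
    refine Submodule.le_of_le_smul_of_le_jacobson_bot Module.Finite.fg_top hI fun y _ => ?_
    obtain ⟨x, hx⟩ := Finsupp.mapRange_surjective _ (map_zero _) Ideal.Quotient.mk_surjective
      (b.repr (Submodule.Quotient.mk y))
    have hxy : y - φ x ∈ J • (⊤ : Submodule R M) := by
      rw [← Submodule.Quotient.eq, ← b.repr.injective.eq_iff, hφ, hx]
    rw [← add_sub_cancel (φ x) y]
    exact Submodule.add_mem_sup ⟨x, rfl⟩ (Ideal.mem_smul_top_of_mem_map_smul_top hxy)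
  have hker : LinearMap.ker (φ.restrictScalars A) ≤ I • ⊤ := by
    intro x hx
    have h0 := hφ x
    rw [show φ x = 0 from hx, Submodule.Quotient.mk_zero, map_zero] at h0
    refine Ideal.mem_smul_top_of_mem_map_smul_top (Finsupp.mem_ideal_smul_top fun i => ?_)
    exact Ideal.Quotient.eq_zero_iff_mem.mp (by simpa using (DFunLike.congr_fun h0 i).symm)
  have hinj : Function.Injective φ :=
    (φ.restrictScalars A).injective_of_surjective_of_ker_le_smul_top hI hsurj hker
  exact ⟨Finsupp.basisSingleOne.map (LinearEquiv.ofBijective φ ⟨hinj, hsurj⟩)⟩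

end LiftBasis

section Coinvariants

variable {G : Type*} [CommGroup G] (A : Type*) [CommRing A] (M : Type*) [AddCommGroup M]
  [Module A M] (N : Subgroup G) [Module (MonoidAlgebra A (G ⧸ N)) M]

def coinvariantsKer (H : Subgroup G) : Submodule A M :=
  Submodule.span A
    {x : M | ∃ g ∈ H, ∃ m : M, x = (single (QuotientGroup.mk g : G ⧸ N) (1 : A)) • m - m}

variable {A M N} {H : Subgroup G}

theorem coinvariantsKer_le_ker {P : Type*} [AddCommGroup P] [Module A P] {f : M →ₗ[A] P}
    (hf : ∀ g ∈ H, ∀ m : M, f (single (QuotientGroup.mk g : G ⧸ N) (1 : A) • m) = f m) :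
    coinvariantsKer A M N H ≤ LinearMap.ker f := by
  rw [coinvariantsKer, Submodule.span_le]
  rintro _ ⟨g, hg, m, rfl⟩
  simp [hf g hg m]

theorem coinvariantsKer_mkQ_single_smul {g g' : G} (hg : g * g'⁻¹ ∈ H) (m : M) :
    (coinvariantsKer A M N H).mkQ (single (QuotientGroup.mk g : G ⧸ N) (1 : A) • m) =
      (coinvariantsKer A M N H).mkQ (single (QuotientGroup.mk g' : G ⧸ N) (1 : A) • m) := by
  rw [Submodule.mkQ_apply, Submodule.mkQ_apply, Submodule.Quotient.eq]
  refine Submodule.subset_span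
    ⟨g * g'⁻¹, hg, single (QuotientGroup.mk g' : G ⧸ N) (1 : A) • m, ?_⟩
  rw [smul_smul, single_mul_single, one_mul, ← QuotientGroup.mk_mul, inv_mul_cancel_right]

variable [IsScalarTower A (MonoidAlgebra A (G ⧸ N)) M]

theorem span_coinvariantsKer_mkQ_eq_top {ι : Type*}
    (e : Module.Basis ι (MonoidAlgebra A (G ⧸ N)) M) :
    Submodule.span A (Set.range fun p : (G ⧸ H) × ι =>
      (coinvariantsKer A M N H).mkQ
        (single (QuotientGroup.mk p.1.out : G ⧸ N) (1 : A) • e p.2)) = ⊤ := by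
  rw [eq_top_iff, ← Submodule.range_mkQ, LinearMap.range_eq_map,
    ← ((MonoidAlgebra.basis (G ⧸ N) A).smulTower e).span_eq, Submodule.map_span,
    Submodule.span_le]
  rintro _ ⟨_, ⟨⟨q, i⟩, rfl⟩, rfl⟩
  obtain ⟨g, rfl⟩ := QuotientGroup.mk_surjective q
  refine Submodule.subset_span ⟨(QuotientGroup.mk g, i), ?_⟩
  rw [Module.Basis.smulTower_apply, MonoidAlgebra.basis_apply]
  refine coinvariantsKer_mkQ_single_smul ?_ _
  rw [← QuotientGroup.eq_one_iff, QuotientGroup.mk_mul, QuotientGroup.mk_inv,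
    QuotientGroup.out_eq', mul_inv_cancel]

theorem ker_eq_coinvariantsKer [Finite (G ⧸ H)] {ι : Type*} [Finite ι]
    (e : Module.Basis ι (MonoidAlgebra A (G ⧸ N)) M) {P : Type*} [AddCommGroup P] [Module A P]
    (b : Module.Basis ((G ⧸ H) × ι) A P) {f : M →ₗ[A] P} (hsurj : Function.Surjective f)
    (hf : ∀ g ∈ H, ∀ m : M, f (single (QuotientGroup.mk g : G ⧸ N) (1 : A) • m) = f m) :
    LinearMap.ker f = coinvariantsKer A M N H := by
  set K := coinvariantsKer A M N H
  have hK := coinvariantsKer_le_ker hf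
  have hinj : Function.Injective (K.liftQ f hK) :=
    LinearMap.injective_of_surjective_of_span_eq_top (span_coinvariantsKer_mkQ_eq_top e) b _
      (by rwa [← LinearMap.range_eq_top, Submodule.range_liftQ, LinearMap.range_eq_top])
  refine le_antisymm (fun m hm => ?_) hK
  rw [← Submodule.ker_mkQ K, LinearMap.mem_ker]
  exact hinj (by simpa using hm)

end Coinvariants

/-- The base change `M s ⊗_{A s} A r` is modelled by `P s r h`, and the claim that
`M r ⊗_{A r[G ⧸ N r]} A r[G ⧸ N s] → P s r h` is an isomorphism is stated as: `ρ s r h` is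
surjective with kernel spanned by the `g • m - m`, `g ∈ N s`. -/
theorem stmt_12_general
    (G : Type) [CommGroup G] (N : ℕ → Subgroup G)
    [∀ r, Finite (G ⧸ N r)]
    (A : ℕ → Type) [∀ r, CommRing (A r)] [∀ r, IsLocalRing (A r)]
    (I : ∀ r, Ideal (A r)) (hI : ∀ r, I r ≠ ⊤)
    (M : ℕ → Type) [∀ r, AddCommGroup (M r)] [∀ r, Module (A r) (M r)]
    [∀ r, Module (MonoidAlgebra (A r) (G ⧸ N r)) (M r)]
    [∀ r, IsScalarTower (A r) (MonoidAlgebra (A r) (G ⧸ N r)) (M r)]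
    [∀ r, Module.Finite (A r) (M r)] [∀ r, Module.Free (A r) (M r)]
    -- the base-change modules `P s r = M s ⊗_{A s} A r`
    (P : ∀ s r : ℕ, s ≤ r → Type)
    [∀ (s r : ℕ) (h : s ≤ r), AddCommGroup (P s r h)]
    [∀ (s r : ℕ) (h : s ≤ r), Module (A r) (P s r h)]
    [∀ (s r : ℕ) (h : s ≤ r), Module (MonoidAlgebra (A r) (G ⧸ N s)) (P s r h)]
    (j : ∀ (s r : ℕ) (h : s ≤ r), M s →+ P s r h)
    (hjbc : ∀ (s r : ℕ) (h : s ≤ r) (n : ℕ) (b : Module.Basis (Fin n) (A s) (M s)),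
      ∃ b' : Module.Basis (Fin n) (A r) (P s r h), ∀ i, b' i = j s r h (b i))
    -- the transition maps `ρ`
    (ρ : ∀ (s r : ℕ) (h : s ≤ r), M r →ₗ[A r] P s r h)
    (hρG : ∀ (s r : ℕ) (h : s ≤ r) (g : G) (m : M r),
      ρ s r h ((single (QuotientGroup.mk g : G ⧸ N r) (1 : A r)) • m) =
        (single (QuotientGroup.mk g : G ⧸ N s) (1 : A r)) • ρ s r h m)
    (d : ℕ)
    -- hypothesis (a): freeness of rank `d` modulo `I r`
    (ha : ∀ r, Nonempty (Module.Basis (Fin d)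
      ((MonoidAlgebra (A r) (G ⧸ N r)) ⧸
        ((I r).map (algebraMap (A r) (MonoidAlgebra (A r) (G ⧸ N r)))))
      ((M r) ⧸ (((I r).map (algebraMap (A r) (MonoidAlgebra (A r) (G ⧸ N r)))) •
        (⊤ : Submodule (MonoidAlgebra (A r) (G ⧸ N r)) (M r))))))
    -- hypothesis (b): surjectivity of the reduced transition maps
    (hb : ∀ (s r : ℕ) (h : s ≤ r), Function.Surjective
      (fun m : M r => (Submodule.Quotient.mk (ρ s r h m) :
        (P s r h) ⧸ ((I r) • (⊤ : Submodule (A r) (P s r h)))))) :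
    (∀ r, Nonempty (Module.Basis (Fin d) (MonoidAlgebra (A r) (G ⧸ N r)) (M r))) ∧
    (∀ (s r : ℕ) (h : s ≤ r),
      Function.Surjective (ρ s r h) ∧
      LinearMap.ker (ρ s r h) = Submodule.span (A r)
        {x : M r | ∃ g ∈ N s, ∃ m : M r,
          x = (single (QuotientGroup.mk g : G ⧸ N r) (1 : A r)) • m - m}) := by
  have hjac : ∀ r, I r ≤ (⊥ : Ideal (A r)).jacobson := fun r => by
    rw [IsLocalRing.jacobson_eq_maximalIdeal ⊥ bot_ne_top]
    exact IsLocalRing.le_maximalIdeal (hI r)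
  have hfree : ∀ r, Nonempty (Module.Basis (Fin d) (MonoidAlgebra (A r) (G ⧸ N r)) (M r)) :=
    fun r => (ha r).some.nonempty_basis_of_quotient (hjac r)
  refine ⟨hfree, fun s r h => ?_⟩
  obtain ⟨e⟩ := hfree r
  obtain ⟨c⟩ := hfree s
  have : Fintype (G ⧸ N s) := Fintype.ofFinite _
  obtain ⟨b, -⟩ := hjbc s r h _
    (((MonoidAlgebra.basis (G ⧸ N s) (A s)).smulTower c).reindex (Fintype.equivFin _))
  have : Module.Finite (A r) (P s r h) := .of_basis b
  have hsurj := (ρ s r h).surjective_of_surjective_mkQ_comp (hjac r) (hb s r h)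
  refine ⟨hsurj, ker_eq_coinvariantsKer e (b.reindex (Fintype.equivFin _).symm) hsurj ?_⟩
  intro g hg m
  rw [hρG, (QuotientGroup.eq_one_iff g).mpr hg, ← MonoidAlgebra.one_def, one_smul]

/-- Lemma `Technical` (1),(2): the tower formalism.  `{A r}` is an inductive system of
local rings with local transition maps `t`, with compatible proper ideals `I r`;
`Δ₁ = G` is a (pro)cyclic group with descending subgroups `Δ_r = N r` acting on a tower
of modules `M r`, each finite free over `A r`, with `N r` acting trivially on `M r`
(encoded by letting `M r` be a module over the group ring `A r[G ⧸ N r]`).  The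
transition maps are `ρ : M r → M s ⊗_{A s} A r` for `s ≤ r`; here the base change
`M s ⊗_{A s} A r` is encoded as an abstract module `P s r` equipped with a
`t`-semilinear map `j : M s → P s r` carrying bases to bases.  Assuming
(a) `M r / I_r M r` is free of rank `d` over `(A r / I r)[G ⧸ N r]` and
(b) the reduced transition maps are surjective, the conclusion is that `M r` is free
of rank `d` over `A r[G ⧸ N r]`, and the induced maps
`M r ⊗_{A r[G⧸N r]} A r[G⧸N s] → M s ⊗_{A s} A r` are isomorphisms, i.e. `ρ` is
surjective with kernel spanned by the elements `g•m − m`, `g ∈ N s`. -/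
theorem stmt_12
    (G : Type) [CommGroup G] (N : ℕ → Subgroup G) (hN : ∀ s r : ℕ, s ≤ r → N r ≤ N s)
    [∀ r, Finite (G ⧸ N r)]
    (A : ℕ → Type) [∀ r, CommRing (A r)] [∀ r, IsLocalRing (A r)]
    [∀ r, IsLocalRing (MonoidAlgebra (A r) (G ⧸ N r))]
    (t : ∀ s r : ℕ, s ≤ r → (A s →+* A r))
    (ht : ∀ (s r : ℕ) (h : s ≤ r), IsLocalHom (t s r h))
    (htcomp : ∀ (s r u : ℕ) (h₁ : s ≤ r) (h₂ : r ≤ u),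
      (t r u h₂).comp (t s r h₁) = t s u (h₁.trans h₂))
    (I : ∀ r, Ideal (A r)) (hI : ∀ r, I r ≠ ⊤)
    (hIcomp : ∀ (s r : ℕ) (h : s ≤ r), (I s).map (t s r h) ≤ I r)
    (M : ℕ → Type) [∀ r, AddCommGroup (M r)] [∀ r, Module (A r) (M r)]
    [∀ r, Module (MonoidAlgebra (A r) (G ⧸ N r)) (M r)]
    [∀ r, IsScalarTower (A r) (MonoidAlgebra (A r) (G ⧸ N r)) (M r)]
    [∀ r, Module.Finite (A r) (M r)] [∀ r, Module.Free (A r) (M r)]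
    -- the base-change modules `P s r = M s ⊗_{A s} A r`
    (P : ∀ s r : ℕ, s ≤ r → Type)
    [∀ (s r : ℕ) (h : s ≤ r), AddCommGroup (P s r h)]
    [∀ (s r : ℕ) (h : s ≤ r), Module (A r) (P s r h)]
    [∀ (s r : ℕ) (h : s ≤ r), Module (MonoidAlgebra (A r) (G ⧸ N s)) (P s r h)]
    [∀ (s r : ℕ) (h : s ≤ r), IsScalarTower (A r) (MonoidAlgebra (A r) (G ⧸ N s)) (P s r h)]
    (j : ∀ (s r : ℕ) (h : s ≤ r), M s →+ P s r h)
    (hjsemi : ∀ (s r : ℕ) (h : s ≤ r) (a : A s) (m : M s),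
      j s r h (a • m) = t s r h a • j s r h m)
    (hjbc : ∀ (s r : ℕ) (h : s ≤ r) (n : ℕ) (b : Module.Basis (Fin n) (A s) (M s)),
      ∃ b' : Module.Basis (Fin n) (A r) (P s r h), ∀ i, b' i = j s r h (b i))
    (hjG : ∀ (s r : ℕ) (h : s ≤ r) (g : G) (m : M s),
      j s r h ((single (QuotientGroup.mk g : G ⧸ N s) (1 : A s)) • m) =
        (single (QuotientGroup.mk g : G ⧸ N s) (1 : A r)) • j s r h m)
    -- the transition maps `ρ`
    (ρ : ∀ (s r : ℕ) (h : s ≤ r), M r →ₗ[A r] P s r h)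
    (hρG : ∀ (s r : ℕ) (h : s ≤ r) (g : G) (m : M r),
      ρ s r h ((single (QuotientGroup.mk g : G ⧸ N r) (1 : A r)) • m) =
        (single (QuotientGroup.mk g : G ⧸ N s) (1 : A r)) • ρ s r h m)
    (d : ℕ)
    -- hypothesis (a): freeness of rank `d` modulo `I r`
    (ha : ∀ r, Nonempty (Module.Basis (Fin d)
      ((MonoidAlgebra (A r) (G ⧸ N r)) ⧸
        ((I r).map (algebraMap (A r) (MonoidAlgebra (A r) (G ⧸ N r)))))
      ((M r) ⧸ (((I r).map (algebraMap (A r) (MonoidAlgebra (A r) (G ⧸ N r)))) •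
        (⊤ : Submodule (MonoidAlgebra (A r) (G ⧸ N r)) (M r))))))
    -- hypothesis (b): surjectivity of the reduced transition maps
    (hb : ∀ (s r : ℕ) (h : s ≤ r), Function.Surjective
      (fun m : M r => (Submodule.Quotient.mk (ρ s r h m) :
        (P s r h) ⧸ ((I r) • (⊤ : Submodule (A r) (P s r h)))))) :
    (∀ r, Nonempty (Module.Basis (Fin d) (MonoidAlgebra (A r) (G ⧸ N r)) (M r))) ∧
    (∀ (s r : ℕ) (h : s ≤ r),
      Function.Surjective (ρ s r h) ∧
      LinearMap.ker (ρ s r h) = Submodule.span (A r)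
        {x : M r | ∃ g ∈ N s, ∃ m : M r,
          x = (single (QuotientGroup.mk g : G ⧸ N r) (1 : A r)) • m - m}) :=
  stmt_12_general G N A I hI M P j hjbc ρ hρG d ha hb
end

section
/- With hypotheses as in the tower lemma (finite free A_r-modules M_r with Δ_1-action, free of rank d over A_r[Δ_1/Δ_r] with surjective compatible transition maps), for any A_∞ := colim A_r-algebra B, the limit M_B := lim_r (M_r ⊗_{A_r} B) is a free module of rank d over the completed group ring Λ_B := lim_r B[Δ_1/Δ_r], and the canonical map M_B ⊗_{Λ_B} B[Δ_1/Δ_r] → M_r ⊗_{A_r} B is an isomorphism for every r. -/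
open MonoidAlgebra

variable {B : Type} [CommRing B] {G : Type} [CommGroup G]

/-- The transition map `B[G ⧸ N r] → B[G ⧸ N s]` (for `s ≤ r`) between the finite-level
group rings, induced by the quotient map `G ⧸ N r → G ⧸ N s`.  The completed group ring
`Λ_B = lim_r B[Δ₁/Δ_r]` is the set of families compatible under these maps. -/
noncomputable def groupRingTransition (N : ℕ → Subgroup G)
    (hN : ∀ s r : ℕ, s ≤ r → N r ≤ N s) (s r : ℕ) (h : s ≤ r) :
    MonoidAlgebra B (G ⧸ N r) →+* MonoidAlgebra B (G ⧸ N s) :=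
  MonoidAlgebra.mapDomainRingHom B
    (QuotientGroup.map (N r) (N s) (MonoidHom.id G) (by simpa using hN s r h))

/-! Each group ring `B[G ⧸ N r]` is local and the kernel of `τ s r` lies in
`ker(B[G ⧸ N r] → B[G ⧸ N s]) • W r`, so by Nakayama any lift of a basis of `W s` spans `W r`,
and a spanning family of the size of a basis is a basis (surjective endomorphisms of finite
modules are injective). Lifting step by step gives bases `b r` compatible under the `τ`;
coordinates with respect to them identify `M_B` with `Λ_B ^ d`, from which the description of
the kernel of `M_B → W r` follows, while its surjectivity is the Mittag-Leffler argument for the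
surjective transition maps. -/

theorem MonoidAlgebra.mapDomain_surjective {R M N : Type*} [Semiring R] {f : M → N}
    (hf : Function.Surjective f) : Function.Surjective (MonoidAlgebra.mapDomain (R := R) f) :=
  fun x ↦
    let ⟨y, hy⟩ := Finsupp.mapDomain_surjective hf x.coeff
    ⟨.ofCoeff y, by ext1; simpa [MonoidAlgebra.mapDomain] using hy⟩

theorem Submodule.eq_top_of_map_eq_top_of_ker_le_smul {R S M N : Type*} [CommRing R] [Semiring S]
    [AddCommGroup M] [Module R M] [Module.Finite R M] [AddCommGroup N] [Module S N]
    {ρ : R →+* S} [RingHomSurjective ρ] {f : M →ₛₗ[ρ] N} {I : Ideal R}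
    (hI : I ≤ Ideal.jacobson ⊥) (hker : LinearMap.ker f ≤ I • ⊤) {P : Submodule R M}
    (hP : P.map f = ⊤) : P = ⊤ := by
  refine top_le_iff.mp (le_of_le_smul_of_le_jacobson_bot Module.Finite.fg_top hI fun w _ ↦ ?_)
  obtain ⟨w', hw'P, hw'⟩ : f w ∈ P.map f := hP ▸ mem_top
  have hker : w - w' ∈ I • ⊤ := hker (by rw [LinearMap.mem_ker, map_sub, hw', sub_self])
  simpa using add_mem_sup hw'P hker

theorem Module.Basis.exists_lift_of_ker_le_smul {ι R S M N : Type*} [Finite ι] [CommRing R]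
    [Semiring S] [AddCommGroup M] [Module R M] [AddCommGroup N] [Module S N]
    {ρ : R →+* S} [RingHomSurjective ρ] {f : M →ₛₗ[ρ] N} (hf : Function.Surjective f)
    {I : Ideal R} (hI : I ≤ Ideal.jacobson ⊥) (hker : LinearMap.ker f ≤ I • ⊤)
    (b : Basis ι R M) (c : Basis ι S N) : ∃ b' : Basis ι R M, ∀ i, f (b' i) = c i := by
  choose v hv using fun i ↦ hf (c i)
  have : Module.Finite R M := .of_basis b
  have hspan : Submodule.span R (Set.range v) = ⊤ := by
    refine Submodule.eq_top_of_map_eq_top_of_ker_le_smul hI hker ?_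
    have hfv : f ∘ v = c := funext hv
    rw [Submodule.map_span, ← Set.range_comp, hfv, c.span_eq]
  have hsurj : Function.Surjective (b.constr ℕ v) := by
    rw [← LinearMap.range_eq_top, b.constr_range, hspan]
  have hbij : Function.Bijective (b.constr ℕ v) :=
    ⟨OrzechProperty.injective_of_surjective_endomorphism _ hsurj, hsurj⟩
  refine ⟨b.map (LinearEquiv.ofBijective _ hbij), fun i ↦ ?_⟩
  rw [Module.Basis.map_apply, LinearEquiv.ofBijective_apply, b.constr_basis, hv]

theorem Module.Basis.repr_map_of_semilinear {ι R S M N : Type*} [Fintype ι] [Semiring R]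
    [Semiring S] [AddCommMonoid M] [Module R M] [AddCommMonoid N] [Module S N]
    {ρ : R →+* S} (f : M →ₛₗ[ρ] N) {b : Basis ι R M} {c : Basis ι S N}
    (hbc : ∀ i, f (b i) = c i) (x : M) (i : ι) : c.repr (f x) i = ρ (b.repr x i) := by
  have hfx : f x = ∑ j, ρ (b.repr x j) • c j := by
    conv_lhs => rw [← b.sum_repr x]
    simp only [map_sum, LinearMap.map_smulₛₗ, hbc]
  rw [hfx, c.repr_sum_self]

section NatInverseSystem

theorem exists_seq_of_forall_exists_succ {Y : ℕ → Type*} (R : ∀ n, Y n → Y (n + 1) → Prop)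
    (y₀ : Y 0) (step : ∀ n y, ∃ y', R n y y') :
    ∃ y : ∀ n, Y n, y 0 = y₀ ∧ ∀ n, R n (y n) (y (n + 1)) := by
  choose next hnext using step
  exact ⟨fun n ↦ Nat.rec y₀ next n, rfl, fun n ↦ hnext n _⟩

variable {X : ℕ → Type*} (f : ∀ s r, s ≤ r → X r → X s)

theorem compatible_of_compatible_succ (hid : ∀ r (x : X r), f r r le_rfl x = x)
    (hcomp : ∀ s u r (h₁ : s ≤ u) (h₂ : u ≤ r) x, f s u h₁ (f u r h₂ x) = f s r (h₁.trans h₂) x)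
    {x : ∀ r, X r} (hx : ∀ r, f r (r + 1) r.le_succ (x (r + 1)) = x r) :
    ∀ s r (h : s ≤ r), f s r h (x r) = x s := by
  intro s r h
  induction r, h using Nat.le_induction with
  | base => exact hid s (x s)
  | succ r hsr ih => rw [← hcomp s r (r + 1) hsr r.le_succ, hx, ih]

theorem exists_compatible_eq_of_surjective (hid : ∀ r (x : X r), f r r le_rfl x = x)
    (hcomp : ∀ s u r (h₁ : s ≤ u) (h₂ : u ≤ r) x, f s u h₁ (f u r h₂ x) = f s r (h₁.trans h₂) x)
    (hsurj : ∀ s r h, Function.Surjective (f s r h)) (r : ℕ) (y : X r) :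
    ∃ x : ∀ n, X n, (∀ s t (h : s ≤ t), f s t h (x t) = x s) ∧ x r = y := by
  -- below level `r` the thread is forced to be the image of `y`
  obtain ⟨x, -, hx⟩ := exists_seq_of_forall_exists_succ
    (Y := fun n ↦ {z : X n // ∀ h : n ≤ r, z = f n r h y})
    (fun n z z' ↦ f n (n + 1) n.le_succ z'.1 = z.1) ⟨f 0 r r.zero_le y, fun _ ↦ rfl⟩
    (fun n ⟨z, hz⟩ ↦ by
      by_cases hn : n + 1 ≤ r
      · exact ⟨⟨f (n + 1) r hn y, fun _ ↦ rfl⟩, by rw [hcomp]; exact (hz _).symm⟩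
      · obtain ⟨z', hz'⟩ := hsurj n (n + 1) n.le_succ z
        exact ⟨⟨z', fun h ↦ absurd h hn⟩, hz'⟩)
  refine ⟨fun n ↦ (x n).1, compatible_of_compatible_succ f hid hcomp hx, ?_⟩
  exact ((x r).2 le_rfl).trans (hid r y)

end NatInverseSystem

theorem Module.Basis.pi_eq_sum_smul_iff {κ ι : Type*} [Fintype ι] {R M : κ → Type*}
    [∀ k, Semiring (R k)] [∀ k, AddCommMonoid (M k)] [∀ k, Module (R k) (M k)]
    (b : ∀ k, Basis ι (R k) (M k)) (w : ∀ k, M k) (c : ι → ∀ k, R k) :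
    w = ∑ i, c i • (fun k ↦ b k i) ↔ c = fun i k ↦ (b k).repr (w k) i := by
  constructor
  · rintro rfl
    ext i k
    simp only [Finset.sum_apply, Pi.smul_apply', Module.Basis.repr_sum_self]
  · rintro rfl
    ext k
    simp [Finset.sum_apply, Pi.smul_apply', Module.Basis.sum_repr]

section GroupRingTower

variable (N : ℕ → Subgroup G) (hN : ∀ s r : ℕ, s ≤ r → N r ≤ N s)

theorem groupRingTransition_surjective {s r : ℕ} (h : s ≤ r) :
    Function.Surjective (groupRingTransition (B := B) N hN s r h) :=
  MonoidAlgebra.mapDomain_surjective <|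
    QuotientGroup.map_surjective_of_surjective _ _ _ QuotientGroup.mk_surjective _

theorem groupRingTransition_single {s r : ℕ} (h : s ≤ r) (g : G) (b : B) :
    groupRingTransition N hN s r h (single (g : G ⧸ N r) b) = single (g : G ⧸ N s) b :=
  MonoidAlgebra.mapDomain_single

theorem single_sub_one_mem_ker_groupRingTransition {s r : ℕ} (h : s ≤ r) {g : G}
    (hg : g ∈ N s) :
    single (g : G ⧸ N r) (1 : B) - 1 ∈ RingHom.ker (groupRingTransition N hN s r h) := by
  rw [RingHom.mem_ker, map_sub, map_one, groupRingTransition_single,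
    (QuotientGroup.eq_one_iff g).mpr hg, ← MonoidAlgebra.one_def, sub_self]

/-- `Λ_B`, the completed group ring `lim_r B[G ⧸ N r]`. -/
def completedGroupRing : Subring (∀ r, MonoidAlgebra B (G ⧸ N r)) where
  carrier := {x | ∀ s r (h : s ≤ r), groupRingTransition N hN s r h (x r) = x s}
  mul_mem' hx hy s r h := by simp only [Pi.mul_apply, map_mul, hx s r h, hy s r h]
  one_mem' s r h := map_one _
  add_mem' hx hy s r h := by simp only [Pi.add_apply, map_add, hx s r h, hy s r h]
  zero_mem' s r h := map_zero _
  neg_mem' hx s r h := by simp only [Pi.neg_apply, map_neg, hx s r h]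

variable {N hN} {W : ℕ → Type*} [∀ r, AddCommGroup (W r)] [∀ r, Module B (W r)]
  [∀ r, Module (MonoidAlgebra B (G ⧸ N r)) (W r)]

/-- `M_B`, the limit `lim_r W r` along the transition maps `τ`. -/
def towerLimit (τ : ∀ s r, s ≤ r → W r →ₗ[B] W s) : Submodule B (∀ r, W r) where
  carrier := {w | ∀ s r (h : s ≤ r), τ s r h (w r) = w s}
  add_mem' hv hw s r h := by simp only [Pi.add_apply, map_add, hv s r h, hw s r h]
  zero_mem' s r h := map_zero _
  smul_mem' c w hw s r h := by simp only [Pi.smul_apply, map_smul, hw s r h]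

theorem smul_mem_towerLimit {τ : ∀ s r, s ≤ r → W r →ₗ[B] W s}
    (hτsemi : ∀ s r (h : s ≤ r) (y : MonoidAlgebra B (G ⧸ N r)) (w : W r),
      τ s r h (y • w) = groupRingTransition N hN s r h y • τ s r h w)
    {x : ∀ r, MonoidAlgebra B (G ⧸ N r)} (hx : x ∈ completedGroupRing N hN)
    {w : ∀ r, W r} (hw : w ∈ towerLimit τ) : x • w ∈ towerLimit τ := fun s r h ↦ by
  simp only [Pi.smul_apply', hτsemi, hx s r h, hw s r h]

def transitionSemilinearMap {s r : ℕ} (h : s ≤ r) (τ : W r →ₗ[B] W s)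
    (hsemi : ∀ (y : MonoidAlgebra B (G ⧸ N r)) (w : W r),
      τ (y • w) = groupRingTransition N hN s r h y • τ w) :
    W r →ₛₗ[groupRingTransition (B := B) N hN s r h] W s where
  toFun := τ
  map_add' := τ.map_add
  map_smul' := hsemi

theorem span_single_smul_sub_le_ker_smul [∀ r, IsScalarTower B (MonoidAlgebra B (G ⧸ N r)) (W r)]
    {s r : ℕ} (h : s ≤ r) :
    Submodule.span B {x : W r | ∃ g ∈ N s, ∃ w : W r,
        x = (single (QuotientGroup.mk g : G ⧸ N r) (1 : B)) • w - w} ≤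
      (RingHom.ker (groupRingTransition (B := B) N hN s r h) •
        (⊤ : Submodule (MonoidAlgebra B (G ⧸ N r)) (W r))).restrictScalars B := by
  rw [Submodule.span_le]
  rintro _ ⟨g, hg, w, rfl⟩
  have hsmul : single (g : G ⧸ N r) (1 : B) • w - w =
      (single (g : G ⧸ N r) 1 - 1 : MonoidAlgebra B (G ⧸ N r)) • w := by
    rw [sub_smul, one_smul]
  rw [SetLike.mem_coe, Submodule.restrictScalars_mem, hsmul]
  exact Submodule.smul_mem_smul (single_sub_one_mem_ker_groupRingTransition N hN h hg)
    Submodule.mem_top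

variable {ι : Type*}

theorem exists_basis_lift_of_transition [∀ r, IsScalarTower B (MonoidAlgebra B (G ⧸ N r)) (W r)]
    {s r : ℕ} [IsLocalRing (MonoidAlgebra B (G ⧸ N r))]
    [Nontrivial (MonoidAlgebra B (G ⧸ N s))] [Finite ι] (h : s ≤ r) (τ : W r →ₗ[B] W s)
    (hsemi : ∀ (y : MonoidAlgebra B (G ⧸ N r)) (w : W r),
      τ (y • w) = groupRingTransition N hN s r h y • τ w)
    (hsurj : Function.Surjective τ)
    (hker : LinearMap.ker τ ≤ Submodule.span B {x : W r | ∃ g ∈ N s, ∃ w : W r,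
        x = (single (QuotientGroup.mk g : G ⧸ N r) (1 : B)) • w - w})
    (b : Module.Basis ι (MonoidAlgebra B (G ⧸ N r)) (W r))
    (c : Module.Basis ι (MonoidAlgebra B (G ⧸ N s)) (W s)) :
    ∃ b' : Module.Basis ι (MonoidAlgebra B (G ⧸ N r)) (W r), ∀ i, τ (b' i) = c i := by
  have : RingHomSurjective (groupRingTransition (B := B) N hN s r h) :=
    ⟨groupRingTransition_surjective N hN h⟩
  have hI : RingHom.ker (groupRingTransition (B := B) N hN s r h) ≤ Ideal.jacobson ⊥ := by
    rw [IsLocalRing.jacobson_eq_maximalIdeal ⊥ bot_ne_top]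
    exact IsLocalRing.le_maximalIdeal (RingHom.ker_ne_top _)
  exact b.exists_lift_of_ker_le_smul (f := transitionSemilinearMap h τ hsemi) hsurj hI
    (fun x hx ↦ span_single_smul_sub_le_ker_smul h (hker hx)) c

theorem exists_compatible_bases [∀ r, IsScalarTower B (MonoidAlgebra B (G ⧸ N r)) (W r)]
    [∀ r, IsLocalRing (MonoidAlgebra B (G ⧸ N r))] [Finite ι]
    (hfree : ∀ r, Nonempty (Module.Basis ι (MonoidAlgebra B (G ⧸ N r)) (W r)))
    (τ : ∀ s r, s ≤ r → W r →ₗ[B] W s)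
    (hτsemi : ∀ s r (h : s ≤ r) (y : MonoidAlgebra B (G ⧸ N r)) (w : W r),
      τ s r h (y • w) = groupRingTransition N hN s r h y • τ s r h w)
    (hτid : ∀ r (x : W r), τ r r le_rfl x = x)
    (hτcomp : ∀ s u r (h₁ : s ≤ u) (h₂ : u ≤ r) (w : W r),
      τ s u h₁ (τ u r h₂ w) = τ s r (h₁.trans h₂) w)
    (hτsurj : ∀ s r (h : s ≤ r), Function.Surjective (τ s r h))
    (hτker : ∀ s r (h : s ≤ r), LinearMap.ker (τ s r h) ≤ Submodule.span B
        {x : W r | ∃ g ∈ N s, ∃ w : W r,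
          x = (single (QuotientGroup.mk g : G ⧸ N r) (1 : B)) • w - w}) :
    ∃ b : ∀ r, Module.Basis ι (MonoidAlgebra B (G ⧸ N r)) (W r),
      ∀ s r (h : s ≤ r) i, τ s r h (b r i) = b s i := by
  obtain ⟨b, -, hb⟩ := exists_seq_of_forall_exists_succ
    (fun n (c : Module.Basis ι _ (W n)) c' ↦ ∀ i, τ n (n + 1) n.le_succ (c' i) = c i)
    (hfree 0).some fun n c ↦ exists_basis_lift_of_transition n.le_succ _
      (hτsemi n (n + 1) n.le_succ) (hτsurj _ _ _) (hτker _ _ _) (hfree (n + 1)).some c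
  exact ⟨b, fun s r h i ↦ compatible_of_compatible_succ (fun s r h ↦ τ s r h) hτid hτcomp
    (x := fun r ↦ b r i) (fun r ↦ hb r i) s r h⟩

variable [Fintype ι] {τ : ∀ s r, s ≤ r → W r →ₗ[B] W s}
  {b : ∀ r, Module.Basis ι (MonoidAlgebra B (G ⧸ N r)) (W r)}

theorem repr_mem_completedGroupRing
    (hτsemi : ∀ s r (h : s ≤ r) (y : MonoidAlgebra B (G ⧸ N r)) (w : W r),
      τ s r h (y • w) = groupRingTransition N hN s r h y • τ s r h w)
    (hb : ∀ s r (h : s ≤ r) i, τ s r h (b r i) = b s i)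
    {w : ∀ r, W r} (hw : w ∈ towerLimit τ) (i : ι) :
    (fun r ↦ (b r).repr (w r) i) ∈ completedGroupRing N hN := fun s r h ↦ by
  rw [← (b r).repr_map_of_semilinear (transitionSemilinearMap h (τ s r h) (hτsemi s r h))
    (hb s r h)]
  exact congrArg (fun y ↦ (b s).repr y i) (hw s r h)

theorem setOf_mem_towerLimit_eval_eq_zero
    (hτsemi : ∀ s r (h : s ≤ r) (y : MonoidAlgebra B (G ⧸ N r)) (w : W r),
      τ s r h (y • w) = groupRingTransition N hN s r h y • τ s r h w)
    (hb : ∀ s r (h : s ≤ r) i, τ s r h (b r i) = b s i) (r : ℕ) :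
    {w | w ∈ towerLimit τ ∧ w r = 0} = (AddSubgroup.closure
      {u | ∃ x ∈ completedGroupRing (B := B) N hN, x r = 0 ∧ ∃ w ∈ towerLimit τ, u = x • w} :
        Set (∀ r, W r)) := by
  apply subset_antisymm
  · rintro w ⟨hw, hwr⟩
    rw [SetLike.mem_coe, (Module.Basis.pi_eq_sum_smul_iff b w _).2 rfl]
    exact AddSubgroup.sum_mem _ fun i _ ↦ AddSubgroup.subset_closure
      ⟨_, repr_mem_completedGroupRing hτsemi hb hw i, by simp [hwr], _,
        fun s t h ↦ hb s t h i, rfl⟩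
  · refine (AddSubgroup.closure_le
      ((towerLimit τ).toAddSubgroup ⊓ (Pi.evalAddMonoidHom W r).ker)).2 ?_
    rintro _ ⟨x, hx, hxr, w, hw, rfl⟩
    exact ⟨smul_mem_towerLimit hτsemi hx hw, by simp [hxr]⟩

end GroupRingTower

theorem stmt_13_general (N : ℕ → Subgroup G) (hN : ∀ s r : ℕ, s ≤ r → N r ≤ N s)
    [∀ r, IsLocalRing (MonoidAlgebra B (G ⧸ N r))]
    (W : ℕ → Type) [∀ r, AddCommGroup (W r)] [∀ r, Module B (W r)]
    [∀ r, Module (MonoidAlgebra B (G ⧸ N r)) (W r)]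
    [∀ r, IsScalarTower B (MonoidAlgebra B (G ⧸ N r)) (W r)]
    (d : ℕ)
    (hfree : ∀ r, Nonempty (Module.Basis (Fin d) (MonoidAlgebra B (G ⧸ N r)) (W r)))
    (τ : ∀ (s r : ℕ), s ≤ r → (W r →ₗ[B] W s))
    (hτsemi : ∀ (s r : ℕ) (h : s ≤ r) (y : MonoidAlgebra B (G ⧸ N r)) (w : W r),
      τ s r h (y • w) = (groupRingTransition N hN s r h y) • τ s r h w)
    (hτid : ∀ r (h : r ≤ r), τ r r h = LinearMap.id)
    (hτcomp : ∀ (s u r : ℕ) (h₁ : s ≤ u) (h₂ : u ≤ r) (w : W r),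
      τ s u h₁ (τ u r h₂ w) = τ s r (h₁.trans h₂) w)
    (hτsurj : ∀ (s r : ℕ) (h : s ≤ r), Function.Surjective (τ s r h))
    (hτker : ∀ (s r : ℕ) (h : s ≤ r),
      LinearMap.ker (τ s r h) = Submodule.span B
        {x : W r | ∃ g ∈ N s, ∃ w : W r,
          x = (single (QuotientGroup.mk g : G ⧸ N r) (1 : B)) • w - w}) :
    -- `Λ_B` and `M_B` as sets of compatible families
    (let Λset : Set (∀ r, MonoidAlgebra B (G ⧸ N r)) :=
      {x | ∀ (s r : ℕ) (h : s ≤ r), groupRingTransition N hN s r h (x r) = x s}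
     let MBset : Set (∀ r, W r) :=
      {w | ∀ (s r : ℕ) (h : s ≤ r), τ s r h (w r) = w s}
     -- `M_B` is a free `Λ_B`-module of rank `d` :
     (∃ v : Fin d → (∀ r, W r), (∀ i, v i ∈ MBset) ∧
        (∀ w ∈ MBset, ∃! c : Fin d → (∀ r, MonoidAlgebra B (G ⧸ N r)),
          (∀ i, c i ∈ Λset) ∧ w = ∑ i : Fin d, c i • v i)) ∧
     -- the control isomorphism `M_B ⊗_{Λ_B} B[Δ₁/Δ_r] ≃ W r` for every `r` :
     (∀ r : ℕ, (∀ y : W r, ∃ w ∈ MBset, w r = y) ∧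
        {w : ∀ r', W r' | w ∈ MBset ∧ w r = 0} =
          (AddSubgroup.closure {u : ∀ r', W r' |
            ∃ x ∈ Λset, x r = 0 ∧ ∃ w' ∈ MBset, u = x • w'} : Set (∀ r', W r')))) := by
  intro Λset MBset
  have hτid' : ∀ r (x : W r), τ r r le_rfl x = x := fun r ↦ LinearMap.congr_fun (hτid r le_rfl)
  obtain ⟨b, hb⟩ := exists_compatible_bases hfree τ hτsemi hτid' hτcomp hτsurj
    fun s r h ↦ (hτker s r h).le
  refine ⟨⟨fun i r ↦ b r i, fun i s r h ↦ hb s r h i, fun w hw ↦ ?_⟩, fun r ↦ ⟨?_, ?_⟩⟩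
  · exact ⟨_, ⟨repr_mem_completedGroupRing hτsemi hb hw,
      (Module.Basis.pi_eq_sum_smul_iff b w _).2 rfl⟩,
      fun c hc ↦ (Module.Basis.pi_eq_sum_smul_iff b w c).1 hc.2⟩
  · exact exists_compatible_eq_of_surjective (fun s r h ↦ τ s r h) hτid' hτcomp hτsurj r
  · exact setOf_mem_towerLimit_eval_eq_zero hτsemi hb r

/-- Lemma `Technical` (3),(4): the `Λ`-adic limit of a tower.  `G = Δ₁` is a commutative
(pro-`p`) group with descending subgroups `N r = Δ_r`; for an `A_∞`-algebra `B`, the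
modules `W r` stand for `M r ⊗_{A r} B`, a tower of modules over the group rings
`B[G ⧸ N r]`, each free of rank `d`, with surjective, functorial, semilinear transition
maps `τ` which moreover induce isomorphisms after `⊗_{B[G⧸Nr]} B[G⧸Ns]` (kernel spanned
by the elements `g•w − w`, `g ∈ N s`).  Conclusion: the limit
`M_B = lim_r W r` (realized as the set of compatible families inside `Π r, W r`) is a
free module of rank `d` over the completed group ring `Λ_B = lim_r B[G ⧸ N r]`
(realized as compatible families of group-ring elements, acting componentwise), and for
each `r` the canonical map `M_B ⊗_{Λ_B} B[Δ₁/Δ_r] → W r` is an isomorphism: the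
projection `M_B → W r` is surjective with "kernel" `ker(Λ_B → B[G⧸N r]) · M_B`. -/
theorem stmt_13 (N : ℕ → Subgroup G) (hN : ∀ s r : ℕ, s ≤ r → N r ≤ N s)
    [∀ r, Finite (G ⧸ N r)]
    [IsLocalRing B] [∀ r, IsLocalRing (MonoidAlgebra B (G ⧸ N r))]
    (W : ℕ → Type) [∀ r, AddCommGroup (W r)] [∀ r, Module B (W r)]
    [∀ r, Module (MonoidAlgebra B (G ⧸ N r)) (W r)]
    [∀ r, IsScalarTower B (MonoidAlgebra B (G ⧸ N r)) (W r)]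
    (d : ℕ)
    (hfree : ∀ r, Nonempty (Module.Basis (Fin d) (MonoidAlgebra B (G ⧸ N r)) (W r)))
    (τ : ∀ (s r : ℕ), s ≤ r → (W r →ₗ[B] W s))
    (hτsemi : ∀ (s r : ℕ) (h : s ≤ r) (y : MonoidAlgebra B (G ⧸ N r)) (w : W r),
      τ s r h (y • w) = (groupRingTransition N hN s r h y) • τ s r h w)
    (hτid : ∀ r (h : r ≤ r), τ r r h = LinearMap.id)
    (hτcomp : ∀ (s u r : ℕ) (h₁ : s ≤ u) (h₂ : u ≤ r) (w : W r),
      τ s u h₁ (τ u r h₂ w) = τ s r (h₁.trans h₂) w)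
    (hτsurj : ∀ (s r : ℕ) (h : s ≤ r), Function.Surjective (τ s r h))
    (hτker : ∀ (s r : ℕ) (h : s ≤ r),
      LinearMap.ker (τ s r h) = Submodule.span B
        {x : W r | ∃ g ∈ N s, ∃ w : W r,
          x = (single (QuotientGroup.mk g : G ⧸ N r) (1 : B)) • w - w}) :
    -- `Λ_B` and `M_B` as sets of compatible families
    (let Λset : Set (∀ r, MonoidAlgebra B (G ⧸ N r)) :=
      {x | ∀ (s r : ℕ) (h : s ≤ r), groupRingTransition N hN s r h (x r) = x s}
     let MBset : Set (∀ r, W r) :=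
      {w | ∀ (s r : ℕ) (h : s ≤ r), τ s r h (w r) = w s}
     -- `M_B` is a free `Λ_B`-module of rank `d` :
     (∃ v : Fin d → (∀ r, W r), (∀ i, v i ∈ MBset) ∧
        (∀ w ∈ MBset, ∃! c : Fin d → (∀ r, MonoidAlgebra B (G ⧸ N r)),
          (∀ i, c i ∈ Λset) ∧ w = ∑ i : Fin d, c i • v i)) ∧
     -- the control isomorphism `M_B ⊗_{Λ_B} B[Δ₁/Δ_r] ≃ W r` for every `r` :
     (∀ r : ℕ, (∀ y : W r, ∃ w ∈ MBset, w r = y) ∧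
        {w : ∀ r', W r' | w ∈ MBset ∧ w r = 0} =
          (AddSubgroup.closure {u : ∀ r', W r' |
            ∃ x ∈ Λset, x r = 0 ∧ ∃ w' ∈ MBset, u = x • w'} : Set (∀ r', W r')))) :=
  stmt_13_general N hN W d hfree τ hτsemi hτid hτcomp hτsurj hτker
end

section
/- Let {M_r} and {M'_r} be two towers of modules over a tower of local rings {A_r}, each free of rank d over A_r[Δ_1/Δ_r] with compatible surjective transitions, equipped with perfect A_r-bilinear pairings ⟨·,·⟩_r : M_r × M'_r → A_r for which every δ ∈ Δ_1 is self-adjoint, satisfying the compatibility ⟨ρ_{r,s} m, ρ'_{r,s} m'⟩_s = Σ_{δ ∈ Δ_s/Δ_r} ⟨m, δ^{-1} m'⟩_r. Then for each r the pairing (m, m')_r := Σ_{δ ∈ Δ_1/Δ_r} ⟨m, δ^{-1} m'⟩_r · δ taking values in A_r[Δ_1/Δ_r] is A_r[Δ_1/Δ_r]-bilinear and perfect. -/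
/-!
For a finite group `Γ`, taking the coefficient at `1` identifies `R[Γ]`-linear maps `N → R[Γ]`
with `R`-linear maps `N → R`; the inverse sends `φ` to `n ↦ ∑ γ, single γ (φ (γ⁻¹ • n))`.
The group-ring valued pairing is the image of `⟨m, ·⟩_r` under this inverse and, by
self-adjointness, also the image of `⟨·, m'⟩_r`. Hence it is `R[Γ]`-linear in each variable,
and it is perfect because `⟨·, ·⟩_r` is.
-/

namespace MonoidAlgebra

section Dual

variable {R Γ N : Type*} [CommSemiring R] [Group Γ] [Fintype Γ]
  [AddCommMonoid N] [Module R N] [Module R[Γ] N] [IsScalarTower R R[Γ] N]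

omit [Fintype Γ] in
theorem single_smul_eq_smul_single_one_smul (g : Γ) (a : R) (n : N) :
    (single g a : R[Γ]) • n = a • (single g 1 : R[Γ]) • n := by
  rw [← smul_assoc, smul_single', mul_one]

noncomputable def liftDual (φ : N →ₗ[R] R) : N →ₗ[R[Γ]] R[Γ] where
  toFun n := ∑ γ, single γ (φ ((single γ⁻¹ 1 : R[Γ]) • n))
  map_add' n n' := by simp only [smul_add, map_add, single_add, Finset.sum_add_distrib]
  map_smul' x n := by
    induction x using induction_linear with
    | zero => simp
    | add x y hx hy =>
      simp only [RingHom.id_apply, smul_eq_mul] at hx hy ⊢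
      simp only [add_smul, smul_add, map_add, single_add, Finset.sum_add_distrib, hx, hy, add_mul]
    | single g a =>
      simp only [RingHom.id_apply, smul_eq_mul, Finset.mul_sum, single_mul_single]
      refine (Fintype.sum_equiv (Equiv.mulLeft g) _ _ fun γ => ?_).symm
      rw [Equiv.coe_mulLeft, single_smul_eq_smul_single_one_smul _ a, smul_comm _ a, smul_smul,
        single_mul_single, mul_inv_rev, inv_mul_cancel_right, one_mul, map_smul φ a, smul_eq_mul]

theorem coeff_liftDual (φ : N →ₗ[R] R) (n : N) (γ : Γ) :
    (liftDual φ n).coeff γ = φ ((single γ⁻¹ 1 : R[Γ]) • n) := by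
  classical
  simp [liftDual, coeff_sum, Finsupp.finsetSum_apply, Finsupp.single_apply]

theorem coeff_one_liftDual (φ : N →ₗ[R] R) (n : N) : (liftDual φ n).coeff (1 : Γ) = φ n := by
  rw [coeff_liftDual, inv_one, ← one_def, one_smul]

noncomputable def dualEquiv : (N →ₗ[R[Γ]] R[Γ]) ≃ (N →ₗ[R] R) where
  toFun f := (Finsupp.lapply 1 ∘ₗ (coeffLinearEquiv R).toLinearMap) ∘ₗ f.restrictScalars R
  invFun := liftDual
  left_inv f := by
    ext n γ
    simp [coeff_liftDual, coeff_single_mul_apply]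
  right_inv φ := by
    ext n
    simp [coeff_one_liftDual]

theorem existsUnique_liftDual_eq {M : Type*} [AddCommMonoid M] [Module R M]
    {B : M →ₗ[R] N →ₗ[R] R} (hB : Function.Bijective B) (f : N →ₗ[R[Γ]] R[Γ]) :
    ∃! m : M, ∀ n, liftDual (B m) n = f n := by
  simp only [← LinearMap.ext_iff]
  convert hB.existsUnique (dualEquiv f) using 2 with m
  exact Equiv.symm_apply_eq dualEquiv

theorem liftDual_flip {M : Type*} [AddCommMonoid M] [Module R M]
    [Module R[Γ] M] [IsScalarTower R R[Γ] M] (B : M →ₗ[R] N →ₗ[R] R)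
    (hB : ∀ (g : Γ) (m : M) (n : N),
      B ((single g 1 : R[Γ]) • m) n = B m ((single g 1 : R[Γ]) • n))
    (m : M) (n : N) : liftDual (Γ := Γ) (B.flip n) m = liftDual (B m) n := by
  ext γ
  rw [coeff_liftDual, coeff_liftDual, LinearMap.flip_apply, hB]

end Dual

end MonoidAlgebra

open MonoidAlgebra

/-- Lemma `LambdaDuality` (finite level): two towers `M r`, `M' r` of modules over a
tower of local rings `A r`, each free of rank `d` over the group ring `A r[G ⧸ N r]`
(for a commutative group `G = Δ₁` with descending subgroups `N r = Δ_r`), with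
compatible surjective transition maps `ρ, ρ'` into the base changes `P s r, P' s r`
(`= M s ⊗_{A s} A r`, resp. `M' s ⊗_{A s} A r`), equipped with perfect `A r`-bilinear
pairings `B r` for which every `δ ∈ Δ₁` is self-adjoint and which satisfy
`⟨ρ m, ρ' m'⟩_s = Σ_{δ ∈ Δ_s/Δ_r} ⟨m, δ⁻¹ m'⟩_r`.  Then for each `r` the group-ring
valued pairing `(m, m')_r = Σ_{δ ∈ Δ₁/Δ_r} ⟨m, δ⁻¹ m'⟩_r · δ` is
`A r[G⧸N r]`-bilinear and perfect. -/
theorem stmt_14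
    (G : Type) [CommGroup G] (N : ℕ → Subgroup G) (hN : ∀ s r : ℕ, s ≤ r → N r ≤ N s)
    [∀ r, Fintype (G ⧸ N r)]
    [∀ s r : ℕ, Fintype (↥(N s) ⧸ ((N r).subgroupOf (N s)))]
    (A : ℕ → Type) [∀ r, CommRing (A r)] [∀ r, IsLocalRing (A r)]
    [∀ r, IsLocalRing (MonoidAlgebra (A r) (G ⧸ N r))]
    (t : ∀ s r : ℕ, s ≤ r → (A s →+* A r))
    (ht : ∀ (s r : ℕ) (h : s ≤ r), IsLocalHom (t s r h))
    (M M' : ℕ → Type) [∀ r, AddCommGroup (M r)] [∀ r, Module (A r) (M r)]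
    [∀ r, AddCommGroup (M' r)] [∀ r, Module (A r) (M' r)]
    [∀ r, Module (MonoidAlgebra (A r) (G ⧸ N r)) (M r)]
    [∀ r, IsScalarTower (A r) (MonoidAlgebra (A r) (G ⧸ N r)) (M r)]
    [∀ r, Module (MonoidAlgebra (A r) (G ⧸ N r)) (M' r)]
    [∀ r, IsScalarTower (A r) (MonoidAlgebra (A r) (G ⧸ N r)) (M' r)]
    (d : ℕ)
    (hfree : ∀ r, Nonempty (Module.Basis (Fin d) (MonoidAlgebra (A r) (G ⧸ N r)) (M r)))
    (hfree' : ∀ r, Nonempty (Module.Basis (Fin d) (MonoidAlgebra (A r) (G ⧸ N r)) (M' r)))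
    -- base changes and transition maps
    (P P' : ∀ s r : ℕ, s ≤ r → Type)
    [∀ (s r : ℕ) (h : s ≤ r), AddCommGroup (P s r h)]
    [∀ (s r : ℕ) (h : s ≤ r), Module (A r) (P s r h)]
    [∀ (s r : ℕ) (h : s ≤ r), AddCommGroup (P' s r h)]
    [∀ (s r : ℕ) (h : s ≤ r), Module (A r) (P' s r h)]
    (j : ∀ (s r : ℕ) (h : s ≤ r), M s →+ P s r h)
    (j' : ∀ (s r : ℕ) (h : s ≤ r), M' s →+ P' s r h)
    (hjsemi : ∀ (s r : ℕ) (h : s ≤ r) (a : A s) (m : M s),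
      j s r h (a • m) = t s r h a • j s r h m)
    (hjsemi' : ∀ (s r : ℕ) (h : s ≤ r) (a : A s) (m : M' s),
      j' s r h (a • m) = t s r h a • j' s r h m)
    (ρ : ∀ (s r : ℕ) (h : s ≤ r), M r →ₗ[A r] P s r h)
    (ρ' : ∀ (s r : ℕ) (h : s ≤ r), M' r →ₗ[A r] P' s r h)
    (hρsurj : ∀ (s r : ℕ) (h : s ≤ r), Function.Surjective (ρ s r h))
    (hρsurj' : ∀ (s r : ℕ) (h : s ≤ r), Function.Surjective (ρ' s r h))
    -- the perfect pairings
    (B : ∀ r, M r →ₗ[A r] M' r →ₗ[A r] A r)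
    (hperf : ∀ r, Function.Bijective (B r))
    (hperf' : ∀ r, Function.Bijective (B r).flip)
    (hselfadj : ∀ (r : ℕ) (g : G) (m : M r) (m' : M' r),
      B r ((single (QuotientGroup.mk g : G ⧸ N r) (1 : A r)) • m) m' =
        B r m ((single (QuotientGroup.mk g : G ⧸ N r) (1 : A r)) • m'))
    -- the base-changed pairings and the compatibility (pairingchangeinr)
    (Bext : ∀ (s r : ℕ) (h : s ≤ r), P s r h → P' s r h → A r)
    (hBext : ∀ (s r : ℕ) (h : s ≤ r) (m : M s) (m' : M' s),
      Bext s r h (j s r h m) (j' s r h m') = t s r h (B s m m'))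
    (hcompat : ∀ (s r : ℕ) (h : s ≤ r) (m : M r) (m' : M' r),
      Bext s r h (ρ s r h m) (ρ' s r h m') =
        ∑ δq : ↥(N s) ⧸ ((N r).subgroupOf (N s)),
          B r m ((single (QuotientGroup.mk (((Quotient.out δq : ↥(N s)) : G)⁻¹) :
            G ⧸ N r) (1 : A r)) • m')) :
    ∀ r : ℕ,
      let pair : M r → M' r → MonoidAlgebra (A r) (G ⧸ N r) := fun m m' =>
        ∑ δ : G ⧸ N r, single δ (B r m ((single δ⁻¹ (1 : A r)) • m'))
      (∀ (x : MonoidAlgebra (A r) (G ⧸ N r)) (m : M r) (m' : M' r),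
        pair (x • m) m' = x * pair m m') ∧
      (∀ (x : MonoidAlgebra (A r) (G ⧸ N r)) (m : M r) (m' : M' r),
        pair m (x • m') = x * pair m m') ∧
      (∀ (m₁ m₂ : M r) (m' : M' r), pair (m₁ + m₂) m' = pair m₁ m' + pair m₂ m') ∧
      (∀ (m : M r) (m₁' m₂' : M' r), pair m (m₁' + m₂') = pair m m₁' + pair m m₂') ∧
      (∀ f : M' r →ₗ[MonoidAlgebra (A r) (G ⧸ N r)] MonoidAlgebra (A r) (G ⧸ N r),
        ∃! m : M r, ∀ m' : M' r, pair m m' = f m') ∧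
      (∀ f : M r →ₗ[MonoidAlgebra (A r) (G ⧸ N r)] MonoidAlgebra (A r) (G ⧸ N r),
        ∃! m' : M' r, ∀ m : M r, pair m m' = f m) := by
  intro r pair
  have hadj : ∀ (q : G ⧸ N r) (m : M r) (m' : M' r),
      B r ((single q (1 : A r)) • m) m' = B r m ((single q (1 : A r)) • m') := by
    rintro ⟨g⟩ m m'
    exact hselfadj r g m m'
  have hflip (m : M r) (m' : M' r) : pair m m' = liftDual ((B r).flip m') m :=
    (liftDual_flip (B r) hadj m m').symm
  refine ⟨fun x m m' => ?_, fun x m m' => ?_, fun m₁ m₂ m' => ?_, fun m m₁' m₂' => ?_,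
    existsUnique_liftDual_eq (hperf r), fun f => ?_⟩
  · rw [hflip, hflip, map_smul, smul_eq_mul]
  · exact (liftDual (B r m)).map_smul x m'
  · rw [hflip, hflip, hflip, map_add]
  · exact (liftDual (B r m)).map_add m₁' m₂'
  · simp only [hflip]
    exact existsUnique_liftDual_eq (hperf' r) f
end
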